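/- arXiv:2112.14162 — 5 statements merged into one kernel-verified Lean document; each statement's English description precedes it below -/
import Mathlib

section
/- Let f ∈ C²([a,b]) with m₂ ≤ f''(x) ≤ M₂ for all x ∈ [a,b], and n ≥ 1. Define ε = [f(b) - f(a)]/(b-a) - [ (f'(a)+f'(b))/(2n) + (1/n)∑_{k=1}^{n-1} f'(a + k(b-a)/n) ]. Then |ε| ≤ (b-a)(M₂ - m₂)/(8n). -/
/-!
The quantity `(b - a) ε` is the error of the composite trapezoidal rule applied to `f'`. On one
subinterval with midpoint `c` and half-width `s`, the function
`E t = f (c + t) - f (c - t) - t (f' (c - t) + f' (c + t))` vanishes at `0` and has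
`E' t = -t (f'' (c + t) - f'' (c - t))`, so `|E'| ≤ (M₂ - m₂) t` and hence
`|E s| ≤ (M₂ - m₂) s² / 2`.
Summing these local errors over the `n` subintervals telescopes to `(b - a) ε`.
-/

open Set Finset

theorem Finset.sum_range_add_succ {R : Type*} [CommRing R] (g : ℕ → R) {n : ℕ}
    (hn : 1 ≤ n) :
    ∑ k ∈ range n, (g k + g (k + 1)) = g 0 + g n + 2 * ∑ k ∈ Ioo 0 n, g k := by
  have hfirst : ∑ k ∈ range n, g k = g 0 + ∑ k ∈ Ioo 0 n, g k := by
    rw [range_eq_Ico, ← Ioo_insert_left (by omega), sum_insert left_notMem_Ioo]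
  have hshift : ∑ k ∈ range n, g (k + 1) + g 0 = ∑ k ∈ range n, g k + g n := by
    rw [← sum_range_succ', sum_range_succ]
  rw [sum_add_distrib]
  linear_combination hshift + 2 * hfirst

variable {f f' f'' : ℝ → ℝ} {a b m M : ℝ}

lemma hasDerivWithinAt_symmetric_trapezoid_error {c s : ℝ}
    (hf' : ∀ x ∈ Icc (c - s) (c + s), HasDerivWithinAt f (f' x) (Icc (c - s) (c + s)) x)
    (hf'' : ∀ x ∈ Icc (c - s) (c + s), HasDerivWithinAt f' (f'' x) (Icc (c - s) (c + s)) x)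
    {t : ℝ} (ht : t ∈ Icc 0 s) :
    HasDerivWithinAt (fun t ↦ f (c + t) - f (c - t) - t * (f' (c - t) + f' (c + t)))
      (-t * (f'' (c + t) - f'' (c - t))) (Icc 0 s) t := by
  have hadd : MapsTo (c + ·) (Icc 0 s) (Icc (c - s) (c + s)) := fun t ht ↦
    ⟨by linarith [ht.1, ht.2], by linarith [ht.2]⟩
  have hsub : MapsTo (c - ·) (Icc 0 s) (Icc (c - s) (c + s)) := fun t ht ↦
    ⟨by linarith [ht.2], by linarith [ht.1, ht.2]⟩
  have deriv_add {g g' : ℝ → ℝ}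
      (hg : ∀ x ∈ Icc (c - s) (c + s), HasDerivWithinAt g (g' x) (Icc (c - s) (c + s)) x) :
      HasDerivWithinAt (fun t ↦ g (c + t)) (g' (c + t)) (Icc 0 s) t := by
    simpa only [mul_one, Function.comp_def] using
      (hg _ (hadd ht)).comp t ((hasDerivAt_id t).const_add c).hasDerivWithinAt hadd
  have deriv_sub {g g' : ℝ → ℝ}
      (hg : ∀ x ∈ Icc (c - s) (c + s), HasDerivWithinAt g (g' x) (Icc (c - s) (c + s)) x) :
      HasDerivWithinAt (fun t ↦ g (c - t)) (-g' (c - t)) (Icc 0 s) t := by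
    simpa only [mul_neg, mul_one, Function.comp_def] using
      (hg _ (hsub ht)).comp t ((hasDerivAt_id t).const_sub c).hasDerivWithinAt hsub
  refine (((deriv_add hf').sub (deriv_sub hf')).sub ((hasDerivWithinAt_id t _).mul
    ((deriv_sub hf'').add (deriv_add hf'')))).congr_deriv ?_
  simp only [Pi.add_apply, id_eq]
  ring

lemma abs_symmetric_trapezoid_error_le {c s : ℝ} (hs : 0 ≤ s)
    (hf' : ∀ x ∈ Icc (c - s) (c + s), HasDerivWithinAt f (f' x) (Icc (c - s) (c + s)) x)
    (hf'' : ∀ x ∈ Icc (c - s) (c + s), HasDerivWithinAt f' (f'' x) (Icc (c - s) (c + s)) x)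
    (hm : ∀ x ∈ Icc (c - s) (c + s), m ≤ f'' x)
    (hM : ∀ x ∈ Icc (c - s) (c + s), f'' x ≤ M) :
    |f (c + s) - f (c - s) - s * (f' (c - s) + f' (c + s))| ≤ (M - m) * s ^ 2 / 2 := by
  have hE {t : ℝ} (ht : t ∈ Icc 0 s) := hasDerivWithinAt_symmetric_trapezoid_error hf' hf'' ht
  have hB (t : ℝ) : HasDerivAt (fun t ↦ (M - m) * t ^ 2 / 2) ((M - m) * t) t :=
    (((hasDerivAt_pow 2 t).const_mul (M - m)).div_const 2).congr_deriv (by simp; ring)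
  have hbound : ∀ t ∈ Ico 0 s, ‖-t * (f'' (c + t) - f'' (c - t))‖ ≤ (M - m) * t := by
    rintro t ⟨ht₀, hts⟩
    have h₁ := hm (c + t) ⟨by linarith, by linarith⟩
    have h₂ := hM (c + t) ⟨by linarith, by linarith⟩
    have h₃ := hm (c - t) ⟨by linarith, by linarith⟩
    have h₄ := hM (c - t) ⟨by linarith, by linarith⟩
    rw [Real.norm_eq_abs, abs_mul, abs_neg, abs_of_nonneg ht₀, mul_comm]
    exact mul_le_mul_of_nonneg_right (abs_sub_le_iff.2 ⟨by linarith, by linarith⟩) ht₀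
  simpa using image_norm_le_of_norm_deriv_right_le_deriv_boundary
    (fun t ht ↦ (hE ht).continuousWithinAt)
    (fun t ht ↦ (hE (Ico_subset_Icc_self ht)).mono_of_mem_nhdsWithin
      (Filter.mem_of_superset (Icc_mem_nhdsGE ht.2) (Icc_subset_Icc_left ht.1)))
    (by simp) hB hbound (right_mem_Icc.2 hs)

lemma abs_trapezoid_error_le {u v : ℝ} (huv : u ≤ v)
    (hf' : ∀ x ∈ Icc u v, HasDerivWithinAt f (f' x) (Icc u v) x)
    (hf'' : ∀ x ∈ Icc u v, HasDerivWithinAt f' (f'' x) (Icc u v) x)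
    (hm : ∀ x ∈ Icc u v, m ≤ f'' x) (hM : ∀ x ∈ Icc u v, f'' x ≤ M) :
    |f v - f u - (v - u) * (f' u + f' v) / 2| ≤ (M - m) * (v - u) ^ 2 / 8 := by
  obtain ⟨c, s, rfl, rfl⟩ : ∃ c s, u = c - s ∧ v = c + s :=
    ⟨(u + v) / 2, (v - u) / 2, by ring, by ring⟩
  have key := abs_symmetric_trapezoid_error_le (by linarith) hf' hf'' hm hM
  calc _ = |f (c + s) - f (c - s) - s * (f' (c - s) + f' (c + s))| := by ring_nf
    _ ≤ (M - m) * s ^ 2 / 2 := key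
    _ = _ := by ring

lemma abs_composite_trapezoid_error_le (hab : a ≤ b) {n : ℕ} (hn : 1 ≤ n)
    (hf' : ∀ x ∈ Icc a b, HasDerivWithinAt f (f' x) (Icc a b) x)
    (hf'' : ∀ x ∈ Icc a b, HasDerivWithinAt f' (f'' x) (Icc a b) x)
    (hm : ∀ x ∈ Icc a b, m ≤ f'' x) (hM : ∀ x ∈ Icc a b, f'' x ≤ M) :
    |f b - f a - (b - a) / n * ((f' a + f' b) / 2 + ∑ k ∈ Ioo 0 n, f' (a + k * (b - a) / n))|
      ≤ (M - m) * (b - a) ^ 2 / (8 * n) := by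
  have hn₀ : (0 : ℝ) < n := by exact_mod_cast hn
  set h := (b - a) / n
  set x : ℕ → ℝ := fun k ↦ a + k * (b - a) / n
  have hx0 : x 0 = a := by simp [x]
  have hxn : x n = b := by simp only [x]; field_simp; ring
  have hstep (k : ℕ) : x (k + 1) - x k = h := by simp only [x, h]; push_cast; ring
  have hx_mem {k : ℕ} (hk : k ≤ n) : x k ∈ Icc a b := by
    have hkn : (k : ℝ) ≤ n := by exact_mod_cast hk
    constructor
    · have : 0 ≤ k * (b - a) / n := by positivity
      simp only [x]; linarith
    · have : k * (b - a) / n ≤ b - a := by rw [div_le_iff₀ hn₀]; nlinarith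
      simp only [x]; linarith
  have restrict {g g' : ℝ → ℝ} (hg : ∀ x ∈ Icc a b, HasDerivWithinAt g (g' x) (Icc a b) x)
      {u v : ℝ} (huv : Icc u v ⊆ Icc a b) :
      ∀ x ∈ Icc u v, HasDerivWithinAt g (g' x) (Icc u v) x :=
    fun x hx ↦ (hg x (huv hx)).mono huv
  have hlocal : ∀ k ∈ range n, |f (x (k + 1)) - f (x k) - h * (f' (x k) + f' (x (k + 1))) / 2|
      ≤ (M - m) * h ^ 2 / 8 := by
    intro k hk
    have hk : k + 1 ≤ n := mem_range.1 hk
    have hsub : Icc (x k) (x (k + 1)) ⊆ Icc a b :=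
      Icc_subset_Icc (hx_mem (by omega)).1 (hx_mem hk).2
    have := abs_trapezoid_error_le (by linarith [hstep k, show 0 ≤ h by positivity])
      (restrict hf' hsub) (restrict hf'' hsub) (fun y hy ↦ hm y (hsub hy))
      (fun y hy ↦ hM y (hsub hy))
    rwa [hstep] at this
  have hsum : ∑ k ∈ range n, (f (x (k + 1)) - f (x k) - h * (f' (x k) + f' (x (k + 1))) / 2)
      = f b - f a - h * ((f' a + f' b) / 2 + ∑ k ∈ Ioo 0 n, f' (a + k * (b - a) / n)) := by
    rw [sum_sub_distrib, sum_range_sub (fun k ↦ f (x k)), ← sum_div, ← mul_sum,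
      sum_range_add_succ (fun k ↦ f' (x k)) hn, hx0, hxn]
    ring
  rw [← hsum]
  calc _ ≤ ∑ k ∈ range n, |f (x (k + 1)) - f (x k) - h * (f' (x k) + f' (x (k + 1))) / 2| :=
        abs_sum_le_sum_abs _ _
    _ ≤ ∑ _k ∈ range n, (M - m) * h ^ 2 / 8 := sum_le_sum hlocal
    _ = _ := by simp only [sum_const, card_range, nsmul_eq_mul, h]; field_simp

theorem new_taylor_like_remainder_bound_general
    (a b m₂ M₂ : ℝ) (f f' f'' : ℝ → ℝ) (hab : a < b) (n : ℕ) (hn : 1 ≤ n)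
    (hf' : ∀ x ∈ Set.Icc a b, HasDerivWithinAt f (f' x) (Set.Icc a b) x)
    (hf'' : ∀ x ∈ Set.Icc a b, HasDerivWithinAt f' (f'' x) (Set.Icc a b) x)
    (hm : ∀ x ∈ Set.Icc a b, m₂ ≤ f'' x)
    (hM : ∀ x ∈ Set.Icc a b, f'' x ≤ M₂) :
    |(f b - f a) / (b - a)
      - ((f' a + f' b) / (2 * n)
        + (1 / n) * ∑ k ∈ Finset.Ioo 0 n, f' (a + k * (b - a) / n))|
      ≤ (b - a) * (M₂ - m₂) / (8 * n) := by
  have hba : 0 < b - a := sub_pos.2 hab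
  have hn₀ : (0 : ℝ) < n := by exact_mod_cast hn
  have hε : (f b - f a) / (b - a)
      - ((f' a + f' b) / (2 * n) + (1 / n) * ∑ k ∈ Ioo 0 n, f' (a + k * (b - a) / n))
      = (f b - f a - (b - a) / n *
          ((f' a + f' b) / 2 + ∑ k ∈ Ioo 0 n, f' (a + k * (b - a) / n))) / (b - a) := by
    field_simp
  rw [hε, abs_div, abs_of_pos hba, div_le_iff₀ hba]
  calc _ ≤ (M₂ - m₂) * (b - a) ^ 2 / (8 * n) :=
        abs_composite_trapezoid_error_le hab.le hn hf' hf'' hm hM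
    _ = _ := by field_simp

theorem new_taylor_like_remainder_bound
    (a b m₂ M₂ : ℝ) (f f' f'' : ℝ → ℝ) (hab : a < b) (n : ℕ) (hn : 1 ≤ n)
    (hf' : ∀ x ∈ Set.Icc a b, HasDerivWithinAt f (f' x) (Set.Icc a b) x)
    (hf'' : ∀ x ∈ Set.Icc a b, HasDerivWithinAt f' (f'' x) (Set.Icc a b) x)
    (hcont : ContinuousOn f'' (Set.Icc a b))
    (hm : ∀ x ∈ Set.Icc a b, m₂ ≤ f'' x)
    (hM : ∀ x ∈ Set.Icc a b, f'' x ≤ M₂) :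
    |(f b - f a) / (b - a)
      - ((f' a + f' b) / (2 * n)
        + (1 / n) * ∑ k ∈ Finset.Ioo 0 n, f' (a + k * (b - a) / n))|
      ≤ (b - a) * (M₂ - m₂) / (8 * n) :=
  new_taylor_like_remainder_bound_general a b m₂ M₂ f f' f'' hab n hn hf' hf'' hm hM
end

section
/- Let f ∈ C²([a,b]) with m₂ ≤ f'' ≤ M₂ on [a,b]. Then |f(b) - f(a) - (b-a)(f'(a)+f'(b))/2| ≤ (b-a)²(M₂-m₂)/8. -/
/-!
Integrating by parts against the Peano kernel `t - (a + b) / 2` gives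
`f b - f a - (b - a) (f' a + f' b) / 2 = -∫ₐᵇ (t - (a + b) / 2) (f'' t - c) dt`
for every constant `c`, because the kernel has mean zero. Choosing `c = (m₂ + M₂) / 2`
makes `|f'' - c| ≤ (M₂ - m₂) / 2`, and `∫ₐᵇ |t - (a + b) / 2| dt = (b - a)² / 4`.
-/

open Set intervalIntegral MeasureTheory
open scoped Interval

theorem integral_abs_sub_midpoint {a b : ℝ} (hab : a ≤ b) :
    ∫ t in a..b, |t - (a + b) / 2| = (b - a) ^ 2 / 4 := by
  have ham : a ≤ (a + b) / 2 := by linarith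
  have hmb : (a + b) / 2 ≤ b := by linarith
  set m := (a + b) / 2
  have half (x : ℝ) : ∫ t in Ι m x, |t - m| = (x - m) ^ 2 / 2 := by
    simpa [sq_abs, one_add_one_eq_two] using integral_pow_abs_sub_uIoc (a := m) (b := x) (n := 1)
  have hint : Continuous fun t => |t - m| := by fun_prop
  rw [← integral_add_adjacent_intervals (b := m) (hint.intervalIntegrable _ _)
      (hint.intervalIntegrable _ _), integral_of_le ham, integral_of_le hmb, ← uIoc_of_le ham,
    ← uIoc_of_le hmb, uIoc_comm, half, half]
  ring

theorem abs_integral_mul_sub_midpoint_le {a b K : ℝ} {g : ℝ → ℝ} (hab : a ≤ b)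
    (hg : ∀ t ∈ Ioc a b, |g t| ≤ K) :
    |∫ t in a..b, (t - (a + b) / 2) * g t| ≤ K * (b - a) ^ 2 / 4 := by
  have hbound : ∀ t ∈ Ioc a b, ‖(t - (a + b) / 2) * g t‖ ≤ K * |t - (a + b) / 2| := by
    intro t ht
    rw [Real.norm_eq_abs, abs_mul, mul_comm K]
    exact mul_le_mul_of_nonneg_left (hg t ht) (abs_nonneg _)
  calc |∫ t in a..b, (t - (a + b) / 2) * g t|
      ≤ ∫ t in a..b, K * |t - (a + b) / 2| :=
        norm_integral_le_of_norm_le hab (ae_of_all _ hbound)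
          ((by fun_prop : Continuous fun t => K * |t - (a + b) / 2|).intervalIntegrable _ _)
    _ = K * (b - a) ^ 2 / 4 := by
      rw [intervalIntegral.integral_const_mul, integral_abs_sub_midpoint hab]
      ring

theorem sub_sub_mul_average_deriv_eq_neg_integral {a b c : ℝ} {f f' f'' : ℝ → ℝ}
    (hab : a ≤ b)
    (hf' : ∀ x ∈ Icc a b, HasDerivWithinAt f (f' x) (Icc a b) x)
    (hf'' : ∀ x ∈ Icc a b, HasDerivWithinAt f' (f'' x) (Icc a b) x)
    (hint : IntervalIntegrable f'' volume a b) :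
    f b - f a - (b - a) * ((f' a + f' b) / 2) =
      -∫ t in a..b, (t - (a + b) / 2) * (f'' t - c) := by
  set m := (a + b) / 2
  set G : ℝ → ℝ := fun t => (t - m) * f' t - f t - c * (t - m) ^ 2 / 2
  have hG_cont : ContinuousOn G (Icc a b) := by
    have hf_cont : ContinuousOn f (Icc a b) := fun x hx => (hf' x hx).continuousWithinAt
    have hf'_cont : ContinuousOn f' (Icc a b) := fun x hx => (hf'' x hx).continuousWithinAt
    fun_prop
  have hG_deriv : ∀ x ∈ Ioo a b, HasDerivAt G ((x - m) * (f'' x - c)) x := fun x hx => by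
    have hx_nhds : Icc a b ∈ nhds x := Icc_mem_nhds hx.1 hx.2
    have h₁ := (hf' x (Ioo_subset_Icc_self hx)).hasDerivAt hx_nhds
    have h₂ := (hf'' x (Ioo_subset_Icc_self hx)).hasDerivAt hx_nhds
    refine (((((hasDerivAt_id x).sub_const m).mul h₂).sub h₁).sub
      (((((hasDerivAt_id x).sub_const m).pow 2).const_mul c).div_const 2)).congr_deriv ?_
    simp only [id]
    ring
  have hkernel_int : IntervalIntegrable (fun t => (t - m) * (f'' t - c)) volume a b :=
    (hint.sub intervalIntegrable_const).continuousOn_mul (by fun_prop)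
  rw [integral_eq_sub_of_hasDerivAt_of_le hab hG_cont hG_deriv hkernel_int]
  simp only [G, m]
  ring

theorem taylor_like_two_points
    (a b m₂ M₂ : ℝ) (f f' f'' : ℝ → ℝ) (hab : a < b)
    (hf' : ∀ x ∈ Set.Icc a b, HasDerivWithinAt f (f' x) (Set.Icc a b) x)
    (hf'' : ∀ x ∈ Set.Icc a b, HasDerivWithinAt f' (f'' x) (Set.Icc a b) x)
    (hcont : ContinuousOn f'' (Set.Icc a b))
    (hm : ∀ x ∈ Set.Icc a b, m₂ ≤ f'' x)
    (hM : ∀ x ∈ Set.Icc a b, f'' x ≤ M₂) :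
    |f b - f a - (b - a) * ((f' a + f' b) / 2)| ≤ (b - a) ^ 2 * (M₂ - m₂) / 8 := by
  have hdev : ∀ t ∈ Ioc a b, |f'' t - (m₂ + M₂) / 2| ≤ (M₂ - m₂) / 2 := fun t ht => by
    have := hm t (Ioc_subset_Icc_self ht)
    have := hM t (Ioc_subset_Icc_self ht)
    rw [abs_le]; constructor <;> linarith
  rw [sub_sub_mul_average_deriv_eq_neg_integral (c := (m₂ + M₂) / 2) hab.le hf' hf''
    (hcont.intervalIntegrable_of_Icc hab.le), abs_neg]
  calc _ ≤ (M₂ - m₂) / 2 * (b - a) ^ 2 / 4 := abs_integral_mul_sub_midpoint_le hab.le hdev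
    _ = (b - a) ^ 2 * (M₂ - m₂) / 8 := by ring
end

section
/- Let f ∈ C²([a,b]) with m₂ ≤ f'' ≤ M₂ on [a,b]. Then |f(b) - f(a) - (b-a)·[f'(a) + 2f'((a+b)/2) + f'(b)]/4| ≤ (b-a)²(M₂-m₂)/16. -/
/-!
Apply the trapezoid rule on each half of `[a, b]`. For the trapezoid error on `[c - h, c + h]`,
`φ t = g (c + t) - g (c - t) - t * (g' (c + t) + g' (c - t))` vanishes at `0` and has derivative
`-t * (g'' (c + t) - g'' (c - t))`, of absolute value at most `(M - m) * t`; hence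
`|φ h| ≤ (M - m) * h ^ 2 / 2`. Each half contributes `(M - m) * (b - a) ^ 2 / 32`.
-/

open Set

lemma abs_le_of_abs_hasDerivWithinAt_le_mul {φ φ' : ℝ → ℝ} {h K : ℝ} (hh : 0 ≤ h)
    (hφ : ∀ t ∈ Icc 0 h, HasDerivWithinAt φ (φ' t) (Icc 0 h) t) (hφ0 : φ 0 = 0)
    (hφ' : ∀ t ∈ Icc 0 h, |φ' t| ≤ K * t) :
    |φ h| ≤ K * h ^ 2 / 2 := by
  have hB : ∀ t, HasDerivAt (fun t => K * t ^ 2 / 2) (K * t) t := fun t => by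
    refine (((hasDerivAt_pow 2 t).const_mul K).div_const 2).congr_deriv ?_
    push_cast; ring
  refine image_norm_le_of_norm_deriv_right_le_deriv_boundary (B := fun t => K * t ^ 2 / 2)
    (fun t ht => (hφ t ht).continuousWithinAt) (fun t ht => ?_) (by simp [hφ0]) hB
    (fun t ht => hφ' t (Ico_subset_Icc_self ht)) (right_mem_Icc.2 hh)
  exact (hφ t (Ico_subset_Icc_self ht)).mono_of_mem_nhdsWithin (Icc_mem_nhdsGE_of_mem ht)

lemma abs_trapezoid_error_le_s4 {g g' g'' : ℝ → ℝ} {α β m M : ℝ} (hαβ : α ≤ β)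
    (hg' : ∀ x ∈ Icc α β, HasDerivWithinAt g (g' x) (Icc α β) x)
    (hg'' : ∀ x ∈ Icc α β, HasDerivWithinAt g' (g'' x) (Icc α β) x)
    (hm : ∀ x ∈ Icc α β, m ≤ g'' x) (hM : ∀ x ∈ Icc α β, g'' x ≤ M) :
    |g β - g α - (β - α) * ((g' α + g' β) / 2)| ≤ (M - m) * (β - α) ^ 2 / 8 := by
  set c := (α + β) / 2 with hc
  set h := (β - α) / 2 with hh
  have hplus : MapsTo (c + ·) (Icc 0 h) (Icc α β) := fun t ht =>
    ⟨by linarith [ht.1], by linarith [ht.2]⟩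
  have hminus : MapsTo (c - ·) (Icc 0 h) (Icc α β) := fun t ht =>
    ⟨by linarith [ht.2], by linarith [ht.1]⟩
  have comp_plus {F F' : ℝ → ℝ}
      (hF : ∀ x ∈ Icc α β, HasDerivWithinAt F (F' x) (Icc α β) x)
      {t : ℝ} (ht : t ∈ Icc 0 h) :
      HasDerivWithinAt (fun t => F (c + t)) (F' (c + t)) (Icc 0 h) t :=
    ((hF _ (hplus ht)).comp t ((hasDerivAt_id t).const_add c).hasDerivWithinAt
      hplus).congr_deriv (mul_one _)
  have comp_minus {F F' : ℝ → ℝ}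
      (hF : ∀ x ∈ Icc α β, HasDerivWithinAt F (F' x) (Icc α β) x)
      {t : ℝ} (ht : t ∈ Icc 0 h) :
      HasDerivWithinAt (fun t => F (c - t)) (-F' (c - t)) (Icc 0 h) t :=
    ((hF _ (hminus ht)).comp t ((hasDerivAt_id t).const_sub c).hasDerivWithinAt
      hminus).congr_deriv (mul_neg_one _)
  have hφ : ∀ t ∈ Icc 0 h, HasDerivWithinAt
      (fun t => g (c + t) - g (c - t) - t * (g' (c + t) + g' (c - t)))
      (-t * (g'' (c + t) - g'' (c - t))) (Icc 0 h) t := fun t ht => by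
    refine (((comp_plus hg' ht).sub (comp_minus hg' ht)).sub ((hasDerivWithinAt_id t _).mul
      ((comp_plus hg'' ht).add (comp_minus hg'' ht)))).congr_deriv ?_
    simp only [id, Pi.add_apply]; ring
  have hφ' : ∀ t ∈ Icc 0 h, |-t * (g'' (c + t) - g'' (c - t))| ≤ (M - m) * t := by
    intro t ht
    rw [abs_mul, abs_neg, abs_of_nonneg ht.1, mul_comm]
    have := hm _ (hplus ht); have := hM _ (hplus ht)
    have := hm _ (hminus ht); have := hM _ (hminus ht)
    exact mul_le_mul_of_nonneg_right (abs_sub_le_iff.2 ⟨by linarith, by linarith⟩) ht.1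
  have key := abs_le_of_abs_hasDerivWithinAt_le_mul (by linarith) hφ (by simp) hφ'
  have hcβ : c + h = β := by ring
  have hcα : c - h = α := by ring
  rw [hcβ, hcα] at key
  calc _ = |g β - g α - h * (g' β + g' α)| := by congr 1; ring
    _ ≤ (M - m) * h ^ 2 / 2 := key
    _ = _ := by ring

theorem taylor_like_three_points_general
    (a b m₂ M₂ : ℝ) (f f' f'' : ℝ → ℝ) (hab : a < b)
    (hf' : ∀ x ∈ Set.Icc a b, HasDerivWithinAt f (f' x) (Set.Icc a b) x)
    (hf'' : ∀ x ∈ Set.Icc a b, HasDerivWithinAt f' (f'' x) (Set.Icc a b) x)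
    (hm : ∀ x ∈ Set.Icc a b, m₂ ≤ f'' x)
    (hM : ∀ x ∈ Set.Icc a b, f'' x ≤ M₂) :
    |f b - f a - (b - a) * ((f' a + 2 * f' ((a + b) / 2) + f' b) / 4)|
      ≤ (b - a) ^ 2 * (M₂ - m₂) / 16 := by
  have trapezoid {u v : ℝ} (hau : a ≤ u) (huv : u ≤ v) (hvb : v ≤ b) :
      |f v - f u - (v - u) * ((f' u + f' v) / 2)| ≤ (M₂ - m₂) * (v - u) ^ 2 / 8 := by
    have hsub : Icc u v ⊆ Icc a b := Icc_subset_Icc hau hvb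
    exact abs_trapezoid_error_le_s4 huv (fun x hx => (hf' x (hsub hx)).mono hsub)
      (fun x hx => (hf'' x (hsub hx)).mono hsub) (fun x hx => hm x (hsub hx))
      (fun x hx => hM x (hsub hx))
  set c := (a + b) / 2 with hc
  have left := trapezoid le_rfl (by linarith : a ≤ c) (by linarith)
  have right := trapezoid (by linarith) (by linarith : c ≤ b) le_rfl
  calc _ = |(f c - f a - (c - a) * ((f' a + f' c) / 2))
          + (f b - f c - (b - c) * ((f' c + f' b) / 2))| := by
        congr 1; ring
    _ ≤ _ := abs_add_le _ _
    _ ≤ (M₂ - m₂) * (c - a) ^ 2 / 8 + (M₂ - m₂) * (b - c) ^ 2 / 8 := add_le_add left right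
    _ = _ := by ring

theorem taylor_like_three_points
    (a b m₂ M₂ : ℝ) (f f' f'' : ℝ → ℝ) (hab : a < b)
    (hf' : ∀ x ∈ Set.Icc a b, HasDerivWithinAt f (f' x) (Set.Icc a b) x)
    (hf'' : ∀ x ∈ Set.Icc a b, HasDerivWithinAt f' (f'' x) (Set.Icc a b) x)
    (hcont : ContinuousOn f'' (Set.Icc a b))
    (hm : ∀ x ∈ Set.Icc a b, m₂ ≤ f'' x)
    (hM : ∀ x ∈ Set.Icc a b, f'' x ≤ M₂) :
    |f b - f a - (b - a) * ((f' a + 2 * f' ((a + b) / 2) + f' b) / 4)|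
      ≤ (b - a) ^ 2 * (M₂ - m₂) / 16 :=
  taylor_like_three_points_general a b m₂ M₂ f f' f'' hab hf' hf'' hm hM
end

section
/- Let f ∈ C²([a,b]) with m₂ ≤ f'' ≤ M₂ on [a,b]. Then the corrected trapezoidal rule satisfies |∫_a^b f(x)dx - (b-a)(f(a)+f(b))/2 + (b-a)²(f'(b)-f'(a))/12| ≤ (b-a)³(M₂-m₂)/48. -/
/-!
Integrating by parts twice against the Peano kernel
`K(x) = (x - (a + b) / 2) ^ 2 / 2 - (b - a) ^ 2 / 24` turns the error of the corrected
trapezoidal rule into `∫ K f''`. Since `∫ K = 0`, the constant `(m₂ + M₂) / 2` may be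
subtracted from `f''`, leaving a factor of absolute value at most `(M₂ - m₂) / 2`; and
`∫ |K| = 2 ∫ K⁺ - ∫ K` is at most `3 (b - a) ^ 3 / 80 ≤ (b - a) ^ 3 / 24`, because
`3 (x - (a + b) / 2) ^ 4 - 2 (b - a) ^ 2 K = 3 ((x - (a + b) / 2) ^ 2 - (b - a) ^ 2 / 6) ^ 2`.
-/

open Set MeasureTheory

noncomputable def correctedTrapezoidKernel (a b x : ℝ) : ℝ :=
  (x - (a + b) / 2) ^ 2 / 2 - (b - a) ^ 2 / 24

theorem hasDerivAt_correctedTrapezoidKernel (a b x : ℝ) :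
    HasDerivAt (correctedTrapezoidKernel a b) (x - (a + b) / 2) x := by
  have := ((((hasDerivAt_id x).sub_const ((a + b) / 2)).pow 2).div_const 2).sub_const
    ((b - a) ^ 2 / 24)
  exact this.congr_deriv (by simp)

theorem continuous_correctedTrapezoidKernel (a b : ℝ) :
    Continuous (correctedTrapezoidKernel a b) :=
  continuous_iff_continuousAt.2 fun x ↦
    (hasDerivAt_correctedTrapezoidKernel a b x).continuousAt

section CorrectedTrapezoidKernel

variable {a b : ℝ}

theorem integral_correctedTrapezoidKernel_mul {f f' f'' : ℝ → ℝ} (hab : a ≤ b)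
    (hf' : ∀ x ∈ Icc a b, HasDerivWithinAt f (f' x) (Icc a b) x)
    (hf'' : ∀ x ∈ Icc a b, HasDerivWithinAt f' (f'' x) (Icc a b) x)
    (hint : IntervalIntegrable f'' volume a b) :
    ∫ x in a..b, correctedTrapezoidKernel a b x * f'' x =
      (∫ x in a..b, f x) - (b - a) * ((f a + f b) / 2) + (b - a) ^ 2 * (f' b - f' a) / 12 := by
  set F := fun x ↦ correctedTrapezoidKernel a b x * f' x - (x - (a + b) / 2) * f x
  have hF : ∀ x ∈ Icc a b,
      HasDerivWithinAt F (correctedTrapezoidKernel a b x * f'' x - f x) (Icc a b) x := by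
    intro x hx
    have := ((hasDerivAt_correctedTrapezoidKernel a b x).hasDerivWithinAt.mul (hf'' x hx)).sub
      (((hasDerivAt_id x).sub_const ((a + b) / 2)).hasDerivWithinAt.mul (hf' x hx))
    exact this.congr_deriv (by simp; ring)
  have hf_int : IntervalIntegrable f volume a b :=
    ContinuousOn.intervalIntegrable_of_Icc hab fun x hx ↦ (hf' x hx).continuousWithinAt
  have hKf''_int := hint.continuousOn_mul (continuous_correctedTrapezoidKernel a b).continuousOn
  have ftc := intervalIntegral.integral_eq_sub_of_hasDeriv_right_of_le hab
    (fun x hx ↦ (hF x hx).continuousWithinAt)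
    (fun x hx ↦ ((hF x (Ioo_subset_Icc_self hx)).hasDerivAt
      (Icc_mem_nhds hx.1 hx.2)).hasDerivWithinAt) (hKf''_int.sub hf_int)
  rw [intervalIntegral.integral_sub hKf''_int hf_int] at ftc
  simp only [F] at ftc
  unfold correctedTrapezoidKernel at ftc ⊢
  linear_combination ftc

theorem integral_correctedTrapezoidKernel :
    ∫ x in a..b, correctedTrapezoidKernel a b x = 0 := by
  unfold correctedTrapezoidKernel
  rw [intervalIntegral.integral_sub ((by fun_prop : Continuous _).intervalIntegrable _ _)
    intervalIntegrable_const, intervalIntegral.integral_div,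
    intervalIntegral.integral_comp_sub_right (fun x ↦ x ^ 2)]
  simp only [integral_pow, intervalIntegral.integral_div, intervalIntegral.integral_const,
    smul_eq_mul]
  ring

theorem abs_correctedTrapezoidKernel_le (hab : a ≠ b) (x : ℝ) :
    |correctedTrapezoidKernel a b x|
      ≤ 3 * (x - (a + b) / 2) ^ 4 / (b - a) ^ 2 - correctedTrapezoidKernel a b x := by
  have hL : 0 < (b - a) ^ 2 := by have := sub_ne_zero.2 hab.symm; positivity
  rw [abs_le]
  constructor
  · have : 0 ≤ 3 * (x - (a + b) / 2) ^ 4 / (b - a) ^ 2 := by positivity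
    linarith
  · rw [le_sub_iff_add_le, le_div_iff₀ hL]
    unfold correctedTrapezoidKernel
    nlinarith [sq_nonneg (6 * (x - (a + b) / 2) ^ 2 - (b - a) ^ 2)]

theorem integral_abs_correctedTrapezoidKernel_le (hab : a < b) :
    ∫ x in a..b, |correctedTrapezoidKernel a b x| ≤ (b - a) ^ 3 / 24 := by
  have hK := continuous_correctedTrapezoidKernel a b
  have hquartic : Continuous fun x ↦ 3 * (x - (a + b) / 2) ^ 4 / (b - a) ^ 2 := by fun_prop
  have hquartic_integral :
      ∫ x in a..b, 3 * (x - (a + b) / 2) ^ 4 / (b - a) ^ 2 = 3 * (b - a) ^ 3 / 80 := by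
    have : b - a ≠ 0 := sub_ne_zero.2 hab.ne'
    rw [intervalIntegral.integral_div, intervalIntegral.integral_const_mul,
      intervalIntegral.integral_comp_sub_right (fun x ↦ x ^ 4)]
    simp only [integral_pow]
    field_simp
    ring
  calc ∫ x in a..b, |correctedTrapezoidKernel a b x|
      ≤ ∫ x in a..b,
          (3 * (x - (a + b) / 2) ^ 4 / (b - a) ^ 2 - correctedTrapezoidKernel a b x) :=
        intervalIntegral.integral_mono_on hab.le (hK.abs.intervalIntegrable _ _)
          ((hquartic.sub hK).intervalIntegrable _ _)
          fun x _ ↦ abs_correctedTrapezoidKernel_le hab.ne x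
    _ = 3 * (b - a) ^ 3 / 80 := by
        rw [intervalIntegral.integral_sub (hquartic.intervalIntegrable _ _)
          (hK.intervalIntegrable _ _), hquartic_integral, integral_correctedTrapezoidKernel,
          sub_zero]
    _ ≤ (b - a) ^ 3 / 24 := by linarith [pow_pos (sub_pos.2 hab) 3]

end CorrectedTrapezoidKernel

theorem abs_integral_mul_le_of_integral_eq_zero {a b m M : ℝ} {g h : ℝ → ℝ} (hab : a ≤ b)
    (hg : ContinuousOn g (Icc a b)) (hg₀ : ∫ x in a..b, g x = 0)
    (hh : IntervalIntegrable h volume a b)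
    (hm : ∀ x ∈ Icc a b, m ≤ h x) (hM : ∀ x ∈ Icc a b, h x ≤ M) :
    |∫ x in a..b, g x * h x| ≤ (M - m) / 2 * ∫ x in a..b, |g x| := by
  have hg' : ContinuousOn g (uIcc a b) := by rwa [uIcc_of_le hab]
  have hg_int : IntervalIntegrable g volume a b := hg'.intervalIntegrable
  have hshift : ∫ x in a..b, g x * h x = ∫ x in a..b, g x * (h x - (m + M) / 2) := by
    simp_rw [mul_sub]
    rw [intervalIntegral.integral_sub (hh.continuousOn_mul hg') (hg_int.mul_const _),
      intervalIntegral.integral_mul_const, hg₀, zero_mul, sub_zero]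
  rw [hshift, ← intervalIntegral.integral_const_mul]
  refine (intervalIntegral.abs_integral_le_integral_abs hab).trans <|
    intervalIntegral.integral_mono_on hab
      ((hh.sub intervalIntegrable_const).continuousOn_mul hg').abs (hg_int.abs.const_mul _)
      fun x hx ↦ ?_
  have hdev : |h x - (m + M) / 2| ≤ (M - m) / 2 :=
    abs_le.2 ⟨by linarith [hm x hx], by linarith [hM x hx]⟩
  rw [abs_mul, mul_comm]
  exact mul_le_mul_of_nonneg_right hdev (abs_nonneg _)

theorem corrected_trapezoid_error
    (a b m₂ M₂ : ℝ) (f f' f'' : ℝ → ℝ) (hab : a < b)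
    (hf' : ∀ x ∈ Set.Icc a b, HasDerivWithinAt f (f' x) (Set.Icc a b) x)
    (hf'' : ∀ x ∈ Set.Icc a b, HasDerivWithinAt f' (f'' x) (Set.Icc a b) x)
    (hcont : ContinuousOn f'' (Set.Icc a b))
    (hm : ∀ x ∈ Set.Icc a b, m₂ ≤ f'' x)
    (hM : ∀ x ∈ Set.Icc a b, f'' x ≤ M₂) :
    |(∫ x in a..b, f x) - (b - a) * ((f a + f b) / 2)
        + (b - a) ^ 2 * (f' b - f' a) / 12|
      ≤ (b - a) ^ 3 * (M₂ - m₂) / 48 := by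
  have hmM : m₂ ≤ M₂ := (hm a (left_mem_Icc.2 hab.le)).trans (hM a (left_mem_Icc.2 hab.le))
  have hf''_int : IntervalIntegrable f'' volume a b := hcont.intervalIntegrable_of_Icc hab.le
  rw [← integral_correctedTrapezoidKernel_mul hab.le hf' hf'' hf''_int]
  calc _ ≤ (M₂ - m₂) / 2 * ∫ x in a..b, |correctedTrapezoidKernel a b x| :=
        abs_integral_mul_le_of_integral_eq_zero hab.le
          (continuous_correctedTrapezoidKernel a b).continuousOn
          integral_correctedTrapezoidKernel hf''_int hm hM
    _ ≤ (M₂ - m₂) / 2 * ((b - a) ^ 3 / 24) :=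
        mul_le_mul_of_nonneg_left (integral_abs_correctedTrapezoidKernel_le hab) (by linarith)
    _ = (b - a) ^ 3 * (M₂ - m₂) / 48 := by ring
end

section
/- Let f ∈ C²([a,b]) with m₁ ≤ f' ≤ M₁ and m₂ ≤ f'' ≤ M₂ on [a,b], and n ≥ 1. Define ε = [f(b) - f(a)]/(b-a) - [ f'(a)/(2n) + (1/n)∑_{k=1}^{n} f'(a + k(b-a)/n) ]. Then (b-a)(m₂-M₂)/(8n) - M₁/(2n) ≤ ε ≤ (b-a)(M₂-m₂)/(8n) - m₁/(2n). -/
/-!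
On a cell `[c, d]` of length `ℓ`, expanding `f` to second order from `c` and from `d` towards the
midpoint, with `f''` replaced by `m₂` resp. `M₂`, shows that the trapezoid rule for `∫ f' = f d - f c`
errs by at most `(M₂ - m₂) ℓ² / 8`. Summing over the `n` cells of the uniform grid bounds the
composite trapezoid error by `(M₂ - m₂) (b - a)² / (8 n)`. The weights in `ε` are the trapezoid
weights except that `f' b` carries `1 / n` instead of `1 / (2 n)`; the surplus `f' b / (2 n)` lies
between `m₁ / (2 n)` and `M₁ / (2 n)`.
-/

open Set Finset

lemma monotoneOn_Icc_of_hasDerivWithinAt_nonneg {G g : ℝ → ℝ} {c d : ℝ}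
    (hG : ∀ x ∈ Icc c d, HasDerivWithinAt G (g x) (Icc c d) x)
    (hg : ∀ x ∈ Icc c d, 0 ≤ g x) : MonotoneOn G (Icc c d) :=
  monotoneOn_of_hasDerivWithinAt_nonneg (convex_Icc c d)
    (fun x hx => (hG x hx).continuousWithinAt)
    (fun x hx => (hG x (interior_subset hx)).mono interior_subset)
    (fun x hx => hg x (interior_subset hx))

lemma HasDerivWithinAt.taylor_quadratic {f f' f'' : ℝ → ℝ} {s : Set ℝ} {x : ℝ} (p t : ℝ)
    (hf' : HasDerivWithinAt f (f' x) s x) (hf'' : HasDerivWithinAt f' (f'' x) s x) :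
    HasDerivWithinAt (fun y => f y + f' y * (p - y) + t * (p - y) ^ 2 / 2)
      ((p - x) * (f'' x - t)) s x := by
  have hp : HasDerivWithinAt (fun y => p - y) (-1) s x := (hasDerivWithinAt_id x s).const_sub p
  refine ((hf'.add (hf''.mul hp)).add (((hp.pow 2).const_mul t).div_const 2)).congr_deriv ?_
  norm_num
  ring

section SecondOrderBounds

variable {f f' f'' : ℝ → ℝ} {c d : ℝ}

lemma taylor_lower_bound_of_le_deriv2 {t : ℝ} (hcd : c ≤ d)
    (hf' : ∀ x ∈ Icc c d, HasDerivWithinAt f (f' x) (Icc c d) x)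
    (hf'' : ∀ x ∈ Icc c d, HasDerivWithinAt f' (f'' x) (Icc c d) x)
    (ht : ∀ x ∈ Icc c d, t ≤ f'' x) :
    f c + f' c * (d - c) + t * (d - c) ^ 2 / 2 ≤ f d := by
  have hmono := monotoneOn_Icc_of_hasDerivWithinAt_nonneg
    (fun x hx => (hf' x hx).taylor_quadratic d t (hf'' x hx))
    (fun x hx => mul_nonneg (sub_nonneg.2 hx.2) (sub_nonneg.2 (ht x hx)))
  simpa using hmono (left_mem_Icc.2 hcd) (right_mem_Icc.2 hcd) hcd

lemma taylor_backward_upper_bound_of_deriv2_le {T : ℝ} (hcd : c ≤ d)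
    (hf' : ∀ x ∈ Icc c d, HasDerivWithinAt f (f' x) (Icc c d) x)
    (hf'' : ∀ x ∈ Icc c d, HasDerivWithinAt f' (f'' x) (Icc c d) x)
    (hT : ∀ x ∈ Icc c d, f'' x ≤ T) :
    f c ≤ f d + f' d * (c - d) + T * (c - d) ^ 2 / 2 := by
  have hmono := monotoneOn_Icc_of_hasDerivWithinAt_nonneg
    (fun x hx => (hf' x hx).taylor_quadratic c T (hf'' x hx))
    (fun x hx => mul_nonneg_of_nonpos_of_nonpos (sub_nonpos.2 hx.1) (sub_nonpos.2 (hT x hx)))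
  simpa using hmono (left_mem_Icc.2 hcd) (right_mem_Icc.2 hcd) hcd

lemma trapezoid_error_lower_bound {m M : ℝ} (hcd : c ≤ d)
    (hf' : ∀ x ∈ Icc c d, HasDerivWithinAt f (f' x) (Icc c d) x)
    (hf'' : ∀ x ∈ Icc c d, HasDerivWithinAt f' (f'' x) (Icc c d) x)
    (hm : ∀ x ∈ Icc c d, m ≤ f'' x) (hM : ∀ x ∈ Icc c d, f'' x ≤ M) :
    (m - M) * (d - c) ^ 2 / 8 ≤ f d - f c - (d - c) / 2 * (f' c + f' d) := by
  set e := (c + d) / 2 with he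
  have hce : c ≤ e := by linarith [he]
  have hed : e ≤ d := by linarith [he]
  have hleft : Icc c e ⊆ Icc c d := Icc_subset_Icc_right hed
  have hright : Icc e d ⊆ Icc c d := Icc_subset_Icc_left hce
  have h₁ := taylor_lower_bound_of_le_deriv2 hce
    (fun x hx => (hf' x (hleft hx)).mono hleft) (fun x hx => (hf'' x (hleft hx)).mono hleft)
    (fun x hx => hm x (hleft hx))
  have h₂ := taylor_backward_upper_bound_of_deriv2_le hed
    (fun x hx => (hf' x (hright hx)).mono hright) (fun x hx => (hf'' x (hright hx)).mono hright)
    (fun x hx => hM x (hright hx))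
  rw [he] at h₁ h₂
  linear_combination h₁ + h₂

end SecondOrderBounds

lemma sum_range_trapezoid (g u : ℕ → ℝ) (h : ℝ) (n : ℕ) :
    ∑ j ∈ range n, (g (j + 1) - g j - h / 2 * (u j + u (j + 1)))
      = g n - g 0 - h * (u 0 / 2 + ∑ k ∈ Icc 1 n, u k - u n / 2) := by
  induction n with
  | zero => simp
  | succ n ih =>
    rw [sum_range_succ, ih, sum_Icc_succ_top (by omega)]
    ring

lemma composite_trapezoid_error_lower_bound {f f' f'' : ℝ → ℝ} {a b m M : ℝ} {n : ℕ}
    (hab : a ≤ b) (hn : 0 < n)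
    (hf' : ∀ x ∈ Icc a b, HasDerivWithinAt f (f' x) (Icc a b) x)
    (hf'' : ∀ x ∈ Icc a b, HasDerivWithinAt f' (f'' x) (Icc a b) x)
    (hm : ∀ x ∈ Icc a b, m ≤ f'' x) (hM : ∀ x ∈ Icc a b, f'' x ≤ M) :
    (m - M) * (b - a) ^ 2 / (8 * n) ≤ f b - f a
      - (b - a) / n * (f' a / 2 + ∑ k ∈ Icc 1 n, f' (a + k * (b - a) / n) - f' b / 2) := by
  have hn₀ : (0 : ℝ) < n := by exact_mod_cast hn
  set h := (b - a) / n with hh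
  set x : ℕ → ℝ := fun j => a + j * (b - a) / n with hx
  have hx_succ : ∀ j, x (j + 1) - x j = h := fun j => by simp only [hx, hh]; push_cast; ring
  have hx_mem : ∀ j ≤ n, x j ∈ Icc a b := fun j hj => by
    have hjn : (j : ℝ) ≤ n := by exact_mod_cast hj
    have h₀ : 0 ≤ (j : ℝ) * (b - a) / n := by
      have := sub_nonneg.2 hab
      positivity
    have h₁ : (j : ℝ) * (b - a) / n ≤ b - a := by
      rw [div_le_iff₀ hn₀]
      nlinarith
    constructor <;> simp only [hx] <;> linarith
  have h_nonneg : 0 ≤ h := div_nonneg (sub_nonneg.2 hab) hn₀.le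
  have hstep : ∀ j ∈ range n,
      (m - M) * h ^ 2 / 8 ≤ f (x (j + 1)) - f (x j) - h / 2 * (f' (x j) + f' (x (j + 1))) := by
    intro j hj
    have hj := mem_range.1 hj
    have hsub : Icc (x j) (x (j + 1)) ⊆ Icc a b :=
      Icc_subset_Icc (hx_mem j hj.le).1 (hx_mem (j + 1) hj).2
    rw [← hx_succ j]
    exact trapezoid_error_lower_bound (by linarith [hx_succ j])
      (fun y hy => (hf' y (hsub hy)).mono hsub) (fun y hy => (hf'' y (hsub hy)).mono hsub)
      (fun y hy => hm y (hsub hy)) (fun y hy => hM y (hsub hy))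
  have hsum := sum_le_sum hstep
  rw [sum_range_trapezoid (fun j => f (x j)) (fun j => f' (x j)), sum_const, card_range,
    nsmul_eq_mul] at hsum
  have hx₀ : x 0 = a := by simp [hx]
  have hxn : x n = b := by simp only [hx]; field_simp; ring
  rw [hx₀, hxn] at hsum
  calc (m - M) * (b - a) ^ 2 / (8 * n) = n * ((m - M) * h ^ 2 / 8) := by
        rw [hh]; field_simp
    _ ≤ _ := hsum

lemma composite_trapezoid_error_upper_bound {f f' f'' : ℝ → ℝ} {a b m M : ℝ} {n : ℕ}
    (hab : a ≤ b) (hn : 0 < n)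
    (hf' : ∀ x ∈ Icc a b, HasDerivWithinAt f (f' x) (Icc a b) x)
    (hf'' : ∀ x ∈ Icc a b, HasDerivWithinAt f' (f'' x) (Icc a b) x)
    (hm : ∀ x ∈ Icc a b, m ≤ f'' x) (hM : ∀ x ∈ Icc a b, f'' x ≤ M) :
    f b - f a - (b - a) / n * (f' a / 2 + ∑ k ∈ Icc 1 n, f' (a + k * (b - a) / n) - f' b / 2)
      ≤ (M - m) * (b - a) ^ 2 / (8 * n) := by
  have hneg := composite_trapezoid_error_lower_bound (f := -f) (f' := -f') (f'' := -f'')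
    (m := -M) (M := -m) hab hn (fun x hx => (hf' x hx).neg) (fun x hx => (hf'' x hx).neg)
    (fun x hx => neg_le_neg (hM x hx)) (fun x hx => neg_le_neg (hm x hx))
  simp only [Pi.neg_apply, sum_neg_distrib] at hneg
  linear_combination hneg

theorem taylor_like_without_closure_general
    (a b m₁ M₁ m₂ M₂ : ℝ) (f f' f'' : ℝ → ℝ) (hab : a < b) (n : ℕ) (hn : 1 ≤ n)
    (hf' : ∀ x ∈ Set.Icc a b, HasDerivWithinAt f (f' x) (Set.Icc a b) x)
    (hf'' : ∀ x ∈ Set.Icc a b, HasDerivWithinAt f' (f'' x) (Set.Icc a b) x)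
    (hm1 : ∀ x ∈ Set.Icc a b, m₁ ≤ f' x)
    (hM1 : ∀ x ∈ Set.Icc a b, f' x ≤ M₁)
    (hm2 : ∀ x ∈ Set.Icc a b, m₂ ≤ f'' x)
    (hM2 : ∀ x ∈ Set.Icc a b, f'' x ≤ M₂) :
    (b - a) * (m₂ - M₂) / (8 * n) - M₁ / (2 * n)
      ≤ (f b - f a) / (b - a)
          - (f' a / (2 * n) + (1 / n) * ∑ k ∈ Finset.Icc 1 n, f' (a + k * (b - a) / n))
    ∧ (f b - f a) / (b - a)
        - (f' a / (2 * n) + (1 / n) * ∑ k ∈ Finset.Icc 1 n, f' (a + k * (b - a) / n))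
      ≤ (b - a) * (M₂ - m₂) / (8 * n) - m₁ / (2 * n) := by
  have hba : 0 < b - a := sub_pos.2 hab
  have hn₀ : (0 : ℝ) < n := by exact_mod_cast hn
  have hb : b ∈ Icc a b := right_mem_Icc.2 hab.le
  have lower := composite_trapezoid_error_lower_bound hab.le hn hf' hf'' hm2 hM2
  have upper := composite_trapezoid_error_upper_bound hab.le hn hf' hf'' hm2 hM2
  set S := ∑ k ∈ Icc 1 n, f' (a + k * (b - a) / n)
  set E := f b - f a - (b - a) / n * (f' a / 2 + S - f' b / 2)
  have hε : (f b - f a) / (b - a) - (f' a / (2 * n) + (1 / n) * S)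
      = E / (b - a) - f' b / (2 * n) := by
    simp only [E]; field_simp; ring
  have hscale : ∀ t : ℝ, (b - a) * t / (8 * n) = t * (b - a) ^ 2 / (8 * n) / (b - a) := by
    intro t; field_simp
  rw [hε, hscale, hscale]
  constructor
  · gcongr
    exact hM1 b hb
  · gcongr
    exact hm1 b hb

theorem taylor_like_without_closure
    (a b m₁ M₁ m₂ M₂ : ℝ) (f f' f'' : ℝ → ℝ) (hab : a < b) (n : ℕ) (hn : 1 ≤ n)
    (hf' : ∀ x ∈ Set.Icc a b, HasDerivWithinAt f (f' x) (Set.Icc a b) x)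
    (hf'' : ∀ x ∈ Set.Icc a b, HasDerivWithinAt f' (f'' x) (Set.Icc a b) x)
    (hcont : ContinuousOn f'' (Set.Icc a b))
    (hm1 : ∀ x ∈ Set.Icc a b, m₁ ≤ f' x)
    (hM1 : ∀ x ∈ Set.Icc a b, f' x ≤ M₁)
    (hm2 : ∀ x ∈ Set.Icc a b, m₂ ≤ f'' x)
    (hM2 : ∀ x ∈ Set.Icc a b, f'' x ≤ M₂) :
    (b - a) * (m₂ - M₂) / (8 * n) - M₁ / (2 * n)
      ≤ (f b - f a) / (b - a)
          - (f' a / (2 * n) + (1 / n) * ∑ k ∈ Finset.Icc 1 n, f' (a + k * (b - a) / n))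
    ∧ (f b - f a) / (b - a)
        - (f' a / (2 * n) + (1 / n) * ∑ k ∈ Finset.Icc 1 n, f' (a + k * (b - a) / n))
      ≤ (b - a) * (M₂ - m₂) / (8 * n) - m₁ / (2 * n) :=
  taylor_like_without_closure_general a b m₁ M₁ m₂ M₂ f f' f'' hab n hn hf' hf'' hm1 hM1 hm2 hM2
end
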